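/- arXiv:1009.4061 — 2 statements merged into one kernel-verified Lean document; each statement's English description precedes it below -/
import Mathlib

section
/- If w is a finite word over {1,2} that occurs as a factor of the Kolakoski sequence, then its run-length derivative D(w) (run-length encoding after discarding boundary runs of length ≤ 1) also occurs as a factor of the Kolakoski sequence. -/
namespace Kola

/-- Run-length encoding of a finite word as (letter, count) pairs. -/
def rle : List ℕ → List (ℕ × ℕ)
  | [] => []
  | a :: l =>
    match rle l with
    | [] => [(a, 1)]
    | (b, n) :: t => if a = b then (b, n + 1) :: t else (a, 1) :: (b, n) :: t

/-- Boundary adjustment for the first run: discard if length ≤ r, extend to s if length in (r,s]. -/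
def fixRun (r s : ℕ) : List (ℕ × ℕ) → List (ℕ × ℕ)
  | [] => []
  | (a, n) :: t => if n ≤ r then t else if n ≤ s then (a, s) :: t else (a, n) :: t

/-- The Kolakoski derivative over the alphabet {r,s}. -/
def D (r s : ℕ) (w : List ℕ) : List ℕ :=
  match rle w with
  | [] => []
  | [(_, n)] => if n < s then [] else [n]
  | ps => ((fixRun r s ((fixRun r s ps).reverse)).reverse).map Prod.snd

/-- A C∞-word over {r,s}: all iterated derivatives are words over {r,s}. -/
def IsCInf (r s : ℕ) (w : List ℕ) : Prop :=
  ∀ k : ℕ, ∀ a ∈ (D r s)^[k] w, a = r ∨ a = s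

/-- `t` enumerates the starting indices of the (maximal) runs of the sequence `z`. -/
def IsRunPartition (z : ℕ → ℕ) (t : ℕ → ℕ) : Prop :=
  t 0 = 0 ∧ StrictMono t ∧
  (∀ k i, t k ≤ i → i < t (k + 1) → z i = z (t k)) ∧
  (∀ k, z (t (k + 1)) ≠ z (t k))

/-- `w` is the run-length sequence of `z`. -/
def IsRunLengthSeq (z w : ℕ → ℕ) : Prop :=
  ∃ t, IsRunPartition z t ∧ ∀ k, w k = t (k + 1) - t k

/-- A Kolakoski sequence over {r,s}: a sequence over {r,s} equal to its own run-length sequence. -/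
def IsKolakoski (r s : ℕ) (z : ℕ → ℕ) : Prop :=
  (∀ n, z n = r ∨ z n = s) ∧ IsRunLengthSeq z z

def EventuallyPeriodic (z : ℕ → ℕ) : Prop :=
  ∃ m q : ℕ, 1 ≤ q ∧ ∀ i, m ≤ i → z (i + q) = z i

/-- `w` occurs as a factor of the infinite sequence `z`. -/
def FactorOf (w : List ℕ) (z : ℕ → ℕ) : Prop :=
  ∃ i, w = (List.range w.length).map fun k => z (i + k)

/-- Letter-exchange on words over {r,s}. -/
def exch (r s : ℕ) (w : List ℕ) : List ℕ := w.map fun a => if a = r then s else r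

/-- Number of occurrences of `w` as a factor of the prefix of length `n` of `z`. -/
def countOcc (z : ℕ → ℕ) (w : List ℕ) (n : ℕ) : ℕ :=
  ((Finset.range n).filter fun i => i + w.length ≤ n ∧ ∀ k < w.length, z (i + k) = w.getD k 0).card

/-- All words of length n over {r,s}. -/
def allWords (r s : ℕ) : ℕ → Finset (List ℕ)
  | 0 => {[]}
  | n + 1 => (allWords r s n).image (List.cons r) ∪ (allWords r s n).image (List.cons s)

/-! The maximal runs of a window of `z` are the runs of `z` it meets, the first and
last possibly truncated. Every run of `z` has length at most 2, so a boundary run of the window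
survives in `D` only if it has length 2, i.e. only if it is a complete run of `z`. Hence `D w`
lists the lengths of consecutive runs of `z`, which are consecutive letters of `z` itself. -/

def window (z : ℕ → ℕ) (i n : ℕ) : List ℕ := (List.range n).map fun k => z (i + k)

lemma factorOf_window (z : ℕ → ℕ) (i n : ℕ) : FactorOf (window z i n) z :=
  ⟨i, by simp [window]⟩

lemma window_add (z : ℕ → ℕ) (i m n : ℕ) :
    window z i (m + n) = window z i m ++ window z (i + m) n := by
  simp [window, List.range_add, Nat.add_assoc]

lemma window_succ (z : ℕ → ℕ) (i n : ℕ) : window z i (n + 1) = z i :: window z (i + 1) n := by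
  rw [Nat.add_comm, window_add]
  rfl

lemma window_succ' (z : ℕ → ℕ) (i n : ℕ) : window z i (n + 1) = window z i n ++ [z (i + n)] := by
  rw [window_add]
  rfl

lemma rle_head?_map_fst : ∀ v : List ℕ, (rle v).head?.map Prod.fst = v.head?
  | [] => rfl
  | a :: l => by
    rw [rle]
    rcases rle l with _ | ⟨⟨b, n⟩, t⟩
    · rfl
    · dsimp only
      split <;> simp_all

lemma rle_replicate_append (c : ℕ) {m : ℕ} (hm : m ≠ 0) {v : List ℕ} (hv : v.head? ≠ some c) :
    rle (List.replicate m c ++ v) = (c, m) :: rle v := by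
  induction m with
  | zero => exact absurd rfl hm
  | succ m ih =>
    rw [List.replicate_succ, List.cons_append, rle]
    rcases Nat.eq_zero_or_pos m with rfl | hm
    · rw [List.replicate_zero, List.nil_append]
      have hfst := rle_head?_map_fst v
      rcases h : rle v with _ | ⟨⟨b, n⟩, t⟩
      · rfl
      · rw [h] at hfst
        have hb : b ≠ c := fun hbc => hv (by simpa [hbc] using hfst.symm)
        simp [Ne.symm hb]
    · simp [ih hm.ne']

lemma rle_replicate (c : ℕ) {n : ℕ} (hn : n ≠ 0) : rle (List.replicate n c) = [(c, n)] := by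
  simpa [rle] using rle_replicate_append c hn (v := []) (by simp)

lemma fixRun_one_two (p : ℕ × ℕ) (L : List (ℕ × ℕ)) :
    fixRun 1 2 (p :: L) = (if p.2 ≤ 1 then [] else [p]) ++ L := by
  obtain ⟨a, n⟩ := p
  simp only [fixRun]
  split_ifs <;> simp; omega

lemma D_one_two_of_rle_eq {w : List ℕ} {p q : ℕ × ℕ} {L : List (ℕ × ℕ)}
    (h : rle w = p :: (L ++ [q])) :
    D 1 2 w = (if 2 ≤ p.2 then [p.2] else []) ++ L.map Prod.snd ++
      (if 2 ≤ q.2 then [q.2] else []) := by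
  obtain ⟨q', L', hL⟩ := List.exists_cons_of_ne_nil (show L ++ [q] ≠ [] by simp)
  have hD :
      D 1 2 w = (fixRun 1 2 (fixRun 1 2 (p :: q' :: L')).reverse).reverse.map Prod.snd := by
    unfold D
    rw [h, hL]
  rw [hD, ← hL, fixRun_one_two]
  rw [List.reverse_append, List.reverse_append, List.reverse_singleton, List.singleton_append,
    List.cons_append, fixRun_one_two]
  split_ifs <;> first | omega | simp

namespace IsRunPartition

variable {z t : ℕ → ℕ}

lemma exists_mem_run (ht : IsRunPartition z t) (i : ℕ) : ∃ k, t k ≤ i ∧ i < t (k + 1) := by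
  have hex : ∃ k, i < t k := ⟨i + 1, Nat.lt_of_lt_of_le (Nat.lt_succ_self i) ht.2.1.le_apply⟩
  obtain ⟨k, hk⟩ : ∃ k, Nat.find hex = k + 1 := by
    refine Nat.exists_eq_add_one_of_ne_zero fun h0 => ?_
    have := Nat.find_spec hex
    rw [h0, ht.1] at this
    omega
  refine ⟨k, ?_, hk ▸ Nat.find_spec hex⟩
  exact not_lt.mp (Nat.find_min hex (by omega))

lemma window_eq_replicate (ht : IsRunPartition z t) {k i m : ℕ} (hi : t k ≤ i)
    (hm : i + m ≤ t (k + 1)) :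
    window z i m = List.replicate m (z (t k)) := by
  refine List.eq_replicate_iff.mpr ⟨by simp [window], ?_⟩
  simp only [window, List.mem_map, List.mem_range]
  rintro _ ⟨j, hj, rfl⟩
  exact ht.2.2.1 k (i + j) (by omega) (by omega)

lemma rle_window_eq_cons (ht : IsRunPartition z t) {k i n : ℕ} (hi : t k ≤ i)
    (hik : i < t (k + 1)) (hn : t (k + 1) < i + n) :
    rle (window z i n) =
      (z (t k), t (k + 1) - i) :: rle (window z (t (k + 1)) (i + n - t (k + 1))) := by
  obtain ⟨r, hr⟩ : ∃ r, i + n - t (k + 1) = r + 1 := ⟨i + n - t (k + 1) - 1, by omega⟩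
  have hsplit := window_add z i (t (k + 1) - i) (r + 1)
  rw [show t (k + 1) - i + (r + 1) = n by omega, show i + (t (k + 1) - i) = t (k + 1) by omega]
    at hsplit
  rw [hsplit, hr, ht.window_eq_replicate hi (by omega), rle_replicate_append _ (by omega)]
  rw [window_succ]
  simpa using ht.2.2.2 k

lemma rle_window_run_start (ht : IsRunPartition z t) (d : ℕ) :
    ∀ {k n : ℕ}, t (k + d) < t k + n → t k + n ≤ t (k + d + 1) →
      rle (window z (t k) n) =
        (List.range d).map (fun j => (z (t (k + j)), t (k + j + 1) - t (k + j))) ++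
          [(z (t (k + d)), t k + n - t (k + d))] := by
  induction d with
  | zero =>
    intro k n hn hn'
    rw [Nat.add_zero] at hn hn' ⊢
    rw [ht.window_eq_replicate le_rfl hn', rle_replicate _ (by omega)]
    simp
  | succ d ih =>
    intro k n hn hn'
    have hk1 : t k < t (k + 1) := ht.2.1 (Nat.lt_succ_self k)
    have hmono : t (k + 1) ≤ t (k + (d + 1)) := ht.2.1.monotone (by omega)
    rw [ht.rle_window_eq_cons le_rfl hk1 (by omega)]
    have hk : k + 1 + d = k + (d + 1) := by omega
    rw [ih (k := k + 1) (by rw [hk]; omega) (by rw [hk]; omega), List.range_succ_eq_map]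
    simp only [List.map_cons, List.map_map, List.cons_append, Nat.add_zero, hk]
    congr 3
    · funext j
      simp only [Function.comp_apply, Nat.succ_eq_add_one, show k + 1 + j = k + (j + 1) by omega]
    · congr 1
      omega

lemma rle_window (ht : IsRunPartition z t) {a d i n : ℕ} (hi : t a ≤ i) (hia : i < t (a + 1))
    (hn : t (a + 1 + d) < i + n) (hn' : i + n ≤ t (a + 1 + d + 1)) :
    rle (window z i n) = (z (t a), t (a + 1) - i) ::
      ((List.range d).map (fun j => (z (t (a + 1 + j)), t (a + 1 + j + 1) - t (a + 1 + j))) ++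
        [(z (t (a + 1 + d)), i + n - t (a + 1 + d))]) := by
  have hmono : t (a + 1) ≤ t (a + 1 + d) := ht.2.1.monotone (by omega)
  rw [ht.rle_window_eq_cons hi hia (by omega), ht.rle_window_run_start d (by omega) (by omega)]
  congr 4
  omega

end IsRunPartition

lemma D_of_rle_eq_singleton {r s : ℕ} {w : List ℕ} {c n : ℕ} (h : rle w = [(c, n)]) :
    D r s w = if n < s then [] else [n] := by
  unfold D
  rw [h]

lemma factorOf_append_window_append (ℓ : ℕ → ℕ) {k d m₁ m₂ : ℕ} (h₁ : 2 ≤ m₁ → m₁ = ℓ k)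
    (h₂ : 2 ≤ m₂ → m₂ = ℓ (k + 1 + d)) :
    FactorOf ((if 2 ≤ m₁ then [m₁] else []) ++ window ℓ (k + 1) d ++
      (if 2 ≤ m₂ then [m₂] else [])) ℓ := by
  split_ifs with hm₁ hm₂ hm₂
  · rw [h₁ hm₁, h₂ hm₂, List.singleton_append, ← window_succ,
      show k + 1 + d = k + (d + 1) by omega, ← window_succ']
    exact factorOf_window ℓ k _
  · rw [h₁ hm₁, List.append_nil, List.singleton_append, ← window_succ]
    exact factorOf_window ℓ k _
  · rw [h₂ hm₂, List.nil_append, ← window_succ']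
    exact factorOf_window ℓ (k + 1) _
  · rw [List.nil_append, List.append_nil]
    exact factorOf_window ℓ (k + 1) d

lemma factorOf_D_window {z ℓ : ℕ → ℕ} (hzℓ : IsRunLengthSeq z ℓ) (hℓ : ∀ k, ℓ k ≤ 2)
    (i n : ℕ) : FactorOf (D 1 2 (window z i n)) ℓ := by
  obtain ⟨t, ht, hℓt⟩ := hzℓ
  rcases Nat.eq_zero_or_pos n with rfl | hn
  · exact ⟨0, rfl⟩
  obtain ⟨a, ha, ha'⟩ := ht.exists_mem_run i
  obtain ⟨b, hb, hb'⟩ := ht.exists_mem_run (i + n - 1)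
  have hab : a < b + 1 := ht.2.1.lt_iff_lt.mp (show t a < t (b + 1) by omega)
  rcases (Nat.le_of_lt_succ hab).eq_or_lt with rfl | hab
  · have hw : window z i n = List.replicate n (z (t a)) := ht.window_eq_replicate ha (by omega)
    rw [D_of_rle_eq_singleton (by rw [hw, rle_replicate _ hn.ne'])]
    split_ifs with hn2
    · exact ⟨0, rfl⟩
    · have := hℓ a
      rw [show n = ℓ a by rw [hℓt] at this ⊢; omega]
      exact factorOf_window ℓ a 1
  obtain ⟨d, rfl⟩ : ∃ d, b = a + 1 + d := ⟨b - (a + 1), by omega⟩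
  have hmid : ((List.range d).map fun j =>
      (z (t (a + 1 + j)), t (a + 1 + j + 1) - t (a + 1 + j))).map Prod.snd =
        window ℓ (a + 1) d := by
    simp [window, hℓt]
  rw [D_one_two_of_rle_eq (ht.rle_window (d := d) ha ha' (by omega) (by omega)), hmid]
  refine factorOf_append_window_append ℓ (fun _ => ?_) (fun _ => ?_)
  · have := hℓ a
    rw [hℓt] at this ⊢
    omega
  · have := hℓ (a + 1 + d)
    rw [hℓt] at this ⊢
    omega

theorem derivative_factor_general (z : ℕ → ℕ) (hz : IsKolakoski 1 2 z)
    (w : List ℕ) (hw : FactorOf w z) :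
    FactorOf (D 1 2 w) z := by
  obtain ⟨hz12, hzz⟩ := hz
  obtain ⟨i, hi⟩ := hw
  rw [hi]
  exact factorOf_D_window hzz (fun k => by rcases hz12 k with h | h <;> omega) i _

/-- If `w` occurs as a factor of the Kolakoski sequence over {1,2},
then so does its derivative `D w`. -/
theorem derivative_factor (z : ℕ → ℕ) (hz : IsKolakoski 1 2 z) (h0 : z 0 = 2)
    (w : List ℕ) (hw : FactorOf w z) :
    FactorOf (D 1 2 w) z :=
  derivative_factor_general z hz w hw

end Kola
end

section
/- There exist N ∈ ℕ and a constant C > 0 such that for all n ≥ N, the number γ(n) of C∞-words of length n over {r,s} satisfies γ(n) ≥ C · n^β, where β = ln(r+s)/ln((r²+s²)/(r+s)). -/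
namespace Kola

/-!
Every C∞-word extends to the right, so there are C∞-words of every length. Given a C∞-word `u`
of length `m` starting with the letter `a`, and `n` larger than the weight (sum of letters) of
`u` by `2r`, there are at least `2a` C∞-words `w` of length `n` such that `D w` starts with `u`:
the first block of `w` (either one run of length in `(r, s]`, extended by `D` to `s`, or a
discarded run of length `≤ r` followed by a run of length `a`) can be chosen in `2a` ways, `u` is
extended to the right until its weight is right, and the last block absorbs the remainder. Letter exchange commutes
with `D`, so on average `a = (r + s) / 2` and `γ(n) ≥ (r + s) γ(m)`.

Interior runs of a C∞-word have lengths `r` or `s` and alternate between the letters `r` and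
`s`, so a C∞-word of length `m` has weight at most `Q m + O(1)` with `Q = (r² + s²) / (r + s)`.
Hence `γ(n) ≥ (r + s) γ(n / Q - O(1))`, and iterating gives `γ(n) ≳ (r + s) ^ log_Q n = n ^ β`.
-/

def ofRuns (ps : List (ℕ × ℕ)) : List ℕ :=
  ps.flatMap fun p => List.replicate p.2 p.1

def IsRunList (ps : List (ℕ × ℕ)) : Prop :=
  (∀ p ∈ ps, 1 ≤ p.2) ∧ (ps.map Prod.fst).IsChain (· ≠ ·)

@[simp] lemma ofRuns_nil : ofRuns [] = [] := rfl

@[simp] lemma ofRuns_cons (p : ℕ × ℕ) (ps : List (ℕ × ℕ)) :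
    ofRuns (p :: ps) = List.replicate p.2 p.1 ++ ofRuns ps := rfl

@[simp] lemma ofRuns_append (ps qs : List (ℕ × ℕ)) :
    ofRuns (ps ++ qs) = ofRuns ps ++ ofRuns qs :=
  List.flatMap_append

lemma length_ofRuns (ps : List (ℕ × ℕ)) : (ofRuns ps).length = (ps.map Prod.snd).sum := by
  induction ps with
  | nil => rfl
  | cons p ps ih => simp [ih]

lemma sum_ofRuns (ps : List (ℕ × ℕ)) : (ofRuns ps).sum = (ps.map fun p => p.2 * p.1).sum := by
  induction ps with
  | nil => rfl
  | cons p ps ih => simp [ih]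

lemma rle_cons (a : ℕ) (l : List ℕ) :
    rle (a :: l) = match rle l with
      | [] => [(a, 1)]
      | (b, n) :: t => if a = b then (b, n + 1) :: t else (a, 1) :: (b, n) :: t := rfl

@[simp] lemma ofRuns_rle (w : List ℕ) : ofRuns (rle w) = w := by
  induction w with
  | nil => rfl
  | cons a l ih =>
    rw [rle_cons]
    rcases h : rle l with _ | ⟨⟨b, n⟩, t⟩
    · rw [h] at ih
      simp [← ih]
    · rw [h] at ih
      dsimp only
      split_ifs with hab
      · subst hab
        simp [← ih, List.replicate_succ]
      · simp [← ih]

@[simp] lemma rle_eq_nil_iff {w : List ℕ} : rle w = [] ↔ w = [] := by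
  refine ⟨fun h => ?_, fun h => h ▸ rfl⟩
  rw [← ofRuns_rle w, h, ofRuns_nil]

lemma isRunList_rle (w : List ℕ) : IsRunList (rle w) := by
  induction w with
  | nil => exact ⟨by simp [rle], List.IsChain.nil⟩
  | cons a l ih =>
    obtain ⟨hpos, hchain⟩ := ih
    rw [rle_cons]
    rcases h : rle l with _ | ⟨⟨b, n⟩, t⟩
    · exact ⟨by simp, List.IsChain.singleton _⟩
    · rw [h] at hpos hchain
      dsimp only
      split_ifs with hab
      · refine ⟨?_, ?_⟩
        · intro p hp
          rcases List.mem_cons.1 hp with rfl | hp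
          · simp
          · exact hpos p (List.mem_cons_of_mem _ hp)
        · simpa using hchain
      · refine ⟨?_, List.IsChain.cons_cons hab hchain⟩
        simpa using hpos

lemma fst_mem_of_mem_rle {w : List ℕ} {p : ℕ × ℕ} (hp : p ∈ rle w) : p.1 ∈ w := by
  have hp1 := (isRunList_rle w).1 p hp
  have : p.1 ∈ ofRuns (rle w) := List.mem_flatMap.2 ⟨p, hp, List.mem_replicate.2 ⟨by omega, rfl⟩⟩
  rwa [ofRuns_rle] at this

lemma length_le_length_ofRuns {ps : List (ℕ × ℕ)} (h : ∀ p ∈ ps, 1 ≤ p.2) :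
    ps.length ≤ (ofRuns ps).length := by
  induction ps with
  | nil => simp
  | cons p ps ih =>
    have := h p (by simp)
    have := ih fun q hq => h q (by simp [hq])
    simp only [ofRuns_cons, List.length_cons, List.length_append, List.length_replicate]
    omega

lemma length_rle_le (w : List ℕ) : (rle w).length ≤ w.length := by
  simpa using length_le_length_ofRuns (isRunList_rle w).1

lemma rle_replicate_append_s14 {a n : ℕ} (hn : 1 ≤ n) {w : List ℕ}
    (h : ((rle w).map Prod.fst).head? ≠ some a) :
    rle (List.replicate n a ++ w) = (a, n) :: rle w := by
  induction n, hn using Nat.le_induction with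
  | base =>
    rcases hw : rle w with _ | ⟨⟨b, m⟩, t⟩
    · simp [rle_cons, hw]
    · have hba : a ≠ b := fun hab => h (by simp [hw, hab])
      simp [rle_cons, hw, hba]
  | succ n _ ih => simp [List.replicate_succ, rle_cons, ih]

lemma rle_ofRuns {ps : List (ℕ × ℕ)} (h : IsRunList ps) : rle (ofRuns ps) = ps := by
  induction ps with
  | nil => rfl
  | cons p t ih =>
    obtain ⟨hpos, hchain⟩ := h
    rw [List.map_cons, List.isChain_cons] at hchain
    have iht := ih ⟨fun q hq => hpos q (by simp [hq]), hchain.2⟩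
    have hhead : ((rle (ofRuns t)).map Prod.fst).head? ≠ some p.1 := by
      rw [iht]
      exact fun h => hchain.1 p.1 h rfl
    rw [ofRuns_cons, rle_replicate_append_s14 (hpos p (by simp)) hhead, iht]

lemma rle_append_singleton_self {w : List ℕ} {ps : List (ℕ × ℕ)} {a k : ℕ}
    (h : rle w = ps ++ [(a, k)]) : rle (w ++ [a]) = ps ++ [(a, k + 1)] := by
  obtain ⟨hpos, hchain⟩ := isRunList_rle w
  rw [h] at hpos hchain
  have hw : w ++ [a] = ofRuns (ps ++ [(a, k + 1)]) := by
    rw [← ofRuns_rle w, h]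
    simp [List.replicate_succ']
  rw [hw, rle_ofRuns ⟨?_, by simpa using hchain⟩]
  intro p hp
  rcases List.mem_append.1 hp with hp | hp
  · exact hpos p (by simp [hp])
  · simp [List.mem_singleton.1 hp]

lemma rle_append_singleton_of_ne {w : List ℕ} {ps : List (ℕ × ℕ)} {a k b : ℕ}
    (h : rle w = ps ++ [(a, k)]) (hb : b ≠ a) :
    rle (w ++ [b]) = ps ++ [(a, k), (b, 1)] := by
  obtain ⟨hpos, hchain⟩ := isRunList_rle w
  rw [h] at hpos hchain
  have hw : w ++ [b] = ofRuns (ps ++ [(a, k), (b, 1)]) := by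
    rw [← ofRuns_rle w, h]
    simp
  have hfst : (ps ++ [(a, k), (b, 1)]).map Prod.fst = (ps ++ [(a, k)]).map Prod.fst ++ [b] := by
    simp
  rw [hw, rle_ofRuns ⟨?_, ?_⟩]
  · intro p hp
    rcases List.mem_append.1 hp with hp | hp
    · exact hpos p (by simp [hp])
    · rcases List.mem_pair.1 hp with rfl | rfl
      · exact hpos _ (by simp)
      · rfl
  · rw [hfst]
    exact hchain.append (.singleton b) (by simp [Ne.symm hb])

lemma map_ofRuns (f : ℕ → ℕ) (ps : List (ℕ × ℕ)) :
    (ofRuns ps).map f = ofRuns (ps.map (Prod.map f id)) := by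
  induction ps with
  | nil => rfl
  | cons p ps ih => simp [ih]

lemma rle_map {f : ℕ → ℕ} {w : List ℕ} (hf : Set.InjOn f {a | a ∈ w}) :
    rle (w.map f) = (rle w).map (Prod.map f id) := by
  obtain ⟨hpos, hchain⟩ := isRunList_rle w
  conv_lhs => rw [← ofRuns_rle w, map_ofRuns]
  have hmem : ∀ a ∈ (rle w).map Prod.fst, a ∈ w := fun a ha => by
    obtain ⟨p, hp, rfl⟩ := List.mem_map.1 ha
    exact fst_mem_of_mem_rle hp
  have hfst : ((rle w).map (Prod.map f id)).map Prod.fst = ((rle w).map Prod.fst).map f := by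
    simp
  refine rle_ofRuns ⟨fun p hp => ?_, ?_⟩
  · obtain ⟨q, hq, rfl⟩ := List.mem_map.1 hp
    exact hpos q hq
  · rw [hfst, List.isChain_map]
    exact hchain.imp_of_mem_imp fun a b ha hb hab hfab => hab (hf (hmem a ha) (hmem b hb) hfab)

section Letters

variable {r s : ℕ}

def other (r s a : ℕ) : ℕ := if a = r then s else r

lemma exch_eq_map (w : List ℕ) : exch r s w = w.map (other r s) := rfl

lemma other_eq_or (a : ℕ) : other r s a = r ∨ other r s a = s := by
  unfold other; split_ifs <;> simp

lemma other_ne (hrs : r ≠ s) {a : ℕ} (ha : a = r ∨ a = s) : other r s a ≠ a := by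
  rcases ha with rfl | rfl <;> simp [other, hrs, Ne.symm hrs]

lemma other_other (hrs : r ≠ s) {a : ℕ} (ha : a = r ∨ a = s) : other r s (other r s a) = a := by
  rcases ha with rfl | rfl <;> simp [other, Ne.symm hrs]

lemma add_other {a : ℕ} (ha : a = r ∨ a = s) : a + other r s a = r + s := by
  rcases ha with rfl | rfl <;> unfold other <;> split_ifs <;> omega

def altRuns (r s : ℕ) : ℕ → List ℕ → List (ℕ × ℕ)
  | _, [] => []
  | c, k :: K => (c, k) :: altRuns r s (other r s c) K

@[simp] lemma altRuns_nil (c : ℕ) : altRuns r s c [] = [] := rfl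

@[simp] lemma altRuns_cons (c k : ℕ) (K : List ℕ) :
    altRuns r s c (k :: K) = (c, k) :: altRuns r s (other r s c) K := rfl

@[simp] lemma map_snd_altRuns (c : ℕ) (K : List ℕ) : (altRuns r s c K).map Prod.snd = K := by
  induction K generalizing c with
  | nil => rfl
  | cons k K ih => simp [ih]

lemma fst_eq_or_of_mem_altRuns {c : ℕ} (hc : c = r ∨ c = s) {K : List ℕ} {p : ℕ × ℕ}
    (hp : p ∈ altRuns r s c K) : p.1 = r ∨ p.1 = s := by
  induction K generalizing c with
  | nil => simp at hp
  | cons k K ih =>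
    rcases List.mem_cons.1 hp with rfl | hp
    · exact hc
    · exact ih (other_eq_or c) hp

lemma isRunList_altRuns (hrs : r ≠ s) {c : ℕ} (hc : c = r ∨ c = s) {K : List ℕ}
    (hK : ∀ k ∈ K, 1 ≤ k) : IsRunList (altRuns r s c K) := by
  refine ⟨fun p hp => hK p.2 (by simpa using List.mem_map_of_mem (f := Prod.snd) hp), ?_⟩
  induction K generalizing c with
  | nil => simp
  | cons k K ih =>
    cases K with
    | nil => simp
    | cons k' K =>
      simp only [altRuns_cons, List.map_cons] at ih ⊢
      refine List.IsChain.cons_cons (other_ne hrs hc).symm ?_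
      exact ih (other_eq_or c) fun k hk => hK k (List.mem_cons_of_mem _ hk)

end Letters

section Derivative

variable {r s : ℕ}

/-- What `D` makes of a boundary run of length `k`. -/
def trim (r s k : ℕ) : List ℕ := if k ≤ r then [] else if k ≤ s then [s] else [k]

lemma trim_of_le {k : ℕ} (h : k ≤ r) : trim r s k = [] := if_pos h

lemma trim_of_lt_of_le {k : ℕ} (h₁ : r < k) (h₂ : k ≤ s) : trim r s k = [s] := by
  simp [trim, h₂, Nat.not_le.2 h₁]

lemma fixRun_cons (p : ℕ × ℕ) (t : List (ℕ × ℕ)) : fixRun r s (p :: t) = fixRun r s [p] ++ t := by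
  simp only [fixRun]
  split_ifs <;> simp

lemma reverse_fixRun_singleton (p : ℕ × ℕ) : (fixRun r s [p]).reverse = fixRun r s [p] := by
  simp only [fixRun]
  split_ifs <;> simp

lemma map_snd_fixRun_singleton (p : ℕ × ℕ) : (fixRun r s [p]).map Prod.snd = trim r s p.2 := by
  simp only [fixRun, trim]
  split_ifs <;> simp

lemma D_of_runLengths_eq_singleton {w : List ℕ} {n : ℕ} (h : (rle w).map Prod.snd = [n]) :
    D r s w = if n < s then [] else [n] := by
  obtain ⟨⟨a, n'⟩, hw, rfl⟩ := List.map_eq_singleton_iff.1 h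
  unfold D
  rw [hw]

lemma D_of_runLengths_eq {w : List ℕ} {k₀ k₁ : ℕ} {l : List ℕ}
    (h : (rle w).map Prod.snd = k₀ :: (l ++ [k₁])) :
    D r s w = trim r s k₀ ++ l ++ trim r s k₁ := by
  obtain ⟨p₀, t, hw, rfl, ht⟩ := List.map_eq_cons_iff.1 h
  obtain ⟨L, P, rfl, rfl, hP⟩ := List.map_eq_append_iff.1 ht
  obtain ⟨p₁, rfl, rfl⟩ := List.map_eq_singleton_iff.1 hP
  have hD : D r s w = ((fixRun r s ((fixRun r s (rle w)).reverse)).reverse).map Prod.snd := by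
    unfold D
    rw [hw]
    rcases L with _ | ⟨q, L⟩ <;> rfl
  rw [hD, hw, fixRun_cons, List.reverse_append, List.reverse_append, List.reverse_singleton,
    List.singleton_append, List.cons_append, fixRun_cons p₁]
  simp [map_snd_fixRun_singleton, reverse_fixRun_singleton]

lemma D_congr_runLengths {u v : List ℕ} (h : (rle u).map Prod.snd = (rle v).map Prod.snd) :
    D r s u = D r s v := by
  rcases hK : (rle u).map Prod.snd with _ | ⟨k₀, t⟩
  · rw [hK, eq_comm, List.map_eq_nil_iff, rle_eq_nil_iff] at h
    rw [List.map_eq_nil_iff, rle_eq_nil_iff] at hK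
    rw [h, hK]
  · rw [hK] at h
    rcases List.eq_nil_or_concat' t with rfl | ⟨l, k₁, rfl⟩
    · rw [D_of_runLengths_eq_singleton hK, D_of_runLengths_eq_singleton h.symm]
    · rw [D_of_runLengths_eq hK, D_of_runLengths_eq h.symm]

lemma D_exch (hrs : r ≠ s) {w : List ℕ} (hw : ∀ a ∈ w, a = r ∨ a = s) :
    D r s (exch r s w) = D r s w := by
  refine D_congr_runLengths ?_
  have hinj : Set.InjOn (other r s) {a | a ∈ w} := fun a ha b hb hab => by
    rw [← other_other hrs (hw a ha), hab, other_other hrs (hw b hb)]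
  rw [exch_eq_map, rle_map hinj, List.map_map]
  rfl

end Derivative

section CInf

variable {r s : ℕ}

lemma isCInf_iff {w : List ℕ} :
    IsCInf r s w ↔ (∀ a ∈ w, a = r ∨ a = s) ∧ IsCInf r s (D r s w) := by
  refine ⟨fun h => ⟨by simpa using h 0, fun k => ?_⟩, fun ⟨h₀, h⟩ k => ?_⟩
  · simpa [Function.iterate_succ_apply] using h (k + 1)
  · cases k with
    | zero => simpa using h₀
    | succ k => simpa [Function.iterate_succ_apply] using h k

lemma IsCInf.eq_or_eq {w : List ℕ} (h : IsCInf r s w) : ∀ a ∈ w, a = r ∨ a = s :=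
  (isCInf_iff.1 h).1

lemma IsCInf.derivative {w : List ℕ} (h : IsCInf r s w) : IsCInf r s (D r s w) :=
  (isCInf_iff.1 h).2

lemma isCInf_nil : IsCInf r s [] := fun k => by
  simp [Function.iterate_fixed (show D r s [] = [] from rfl) k]

lemma isCInf_of_D_eq_nil {w : List ℕ} (hw : ∀ a ∈ w, a = r ∨ a = s) (h : D r s w = []) :
    IsCInf r s w :=
  isCInf_iff.2 ⟨hw, h ▸ isCInf_nil⟩

lemma exch_exch (hrs : r ≠ s) {w : List ℕ} (hw : ∀ a ∈ w, a = r ∨ a = s) :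
    exch r s (exch r s w) = w := by
  rw [exch_eq_map, exch_eq_map, List.map_map]
  exact List.map_congr_left (fun a ha => other_other hrs (hw a ha)) |>.trans (List.map_id w)

lemma IsCInf.exch (hrs : r ≠ s) {w : List ℕ} (h : IsCInf r s w) : IsCInf r s (exch r s w) := by
  refine isCInf_iff.2 ⟨fun a ha => ?_, ?_⟩
  · obtain ⟨b, -, rfl⟩ := List.mem_map.1 ha
    exact other_eq_or b
  · rw [D_exch hrs h.eq_or_eq]
    exact h.derivative

lemma le_of_forall_mem_trim (hrs : r ≤ s) {k : ℕ} (h : ∀ a ∈ trim r s k, a = r ∨ a = s) :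
    k ≤ s := by
  by_contra hk
  have := h k (by simp [trim, hk, show ¬ k ≤ r by omega])
  omega

lemma IsCInf.le_of_runLengths_eq_singleton (hrs : r ≤ s) {w : List ℕ} (hw : IsCInf r s w)
    {n : ℕ} (h : (rle w).map Prod.snd = [n]) : n ≤ s := by
  by_contra hn
  have := hw.derivative.eq_or_eq n (by simp [D_of_runLengths_eq_singleton h, show ¬ n < s by omega])
  omega

lemma IsCInf.runLengths_eq (hrs : r ≤ s) {w : List ℕ} (hw : IsCInf r s w) {k₀ k₁ : ℕ}
    {l : List ℕ} (h : (rle w).map Prod.snd = k₀ :: (l ++ [k₁])) :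
    (∀ k ∈ l, k = r ∨ k = s) ∧ k₀ ≤ s ∧ k₁ ≤ s := by
  have hD := hw.derivative.eq_or_eq
  rw [D_of_runLengths_eq h] at hD
  exact ⟨fun k hk => hD k (by simp [hk]),
    le_of_forall_mem_trim hrs fun a ha => hD a (by simp [ha]),
    le_of_forall_mem_trim hrs fun a ha => hD a (by simp [ha])⟩

end CInf

section Extension

variable {r s : ℕ}

lemma trim_succ {k : ℕ} (hkr : k ≠ r) (hks : k < s) : trim r s (k + 1) = trim r s k := by
  unfold trim
  split_ifs <;> first | rfl | omega

lemma D_singleton (hs : 1 < s) (a : ℕ) : D r s [a] = [] := by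
  rw [D_of_runLengths_eq_singleton (show (rle [a]).map Prod.snd = [1] from rfl), if_pos hs]

lemma isCInf_singleton (hs : 1 < s) {a : ℕ} (ha : a = r ∨ a = s) : IsCInf r s [a] :=
  isCInf_of_D_eq_nil (by simpa using ha) (D_singleton hs a)

lemma isCInf_append_singleton {w : List ℕ} {y : ℕ} (hw : ∀ a ∈ w, a = r ∨ a = s)
    (hy : y = r ∨ y = s) (hD : IsCInf r s (D r s (w ++ [y]))) : IsCInf r s (w ++ [y]) := by
  refine isCInf_iff.2 ⟨fun a ha => ?_, hD⟩
  rcases List.mem_append.1 ha with ha | ha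
  · exact hw a ha
  · exact List.mem_singleton.1 ha ▸ hy

lemma D_append_singleton_self {w : List ℕ} {p₀ : ℕ × ℕ} {l : List (ℕ × ℕ)} {a k : ℕ}
    (h : rle w = p₀ :: (l ++ [(a, k)])) :
    D r s (w ++ [a]) = trim r s p₀.2 ++ l.map Prod.snd ++ trim r s (k + 1) := by
  refine D_of_runLengths_eq ?_
  rw [rle_append_singleton_self (ps := p₀ :: l) h]
  simp

lemma D_append_singleton_of_ne (hr : 0 < r) {w : List ℕ} {p₀ : ℕ × ℕ} {l : List (ℕ × ℕ)}
    {a k b : ℕ} (h : rle w = p₀ :: (l ++ [(a, k)])) (hb : b ≠ a) :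
    D r s (w ++ [b]) = trim r s p₀.2 ++ l.map Prod.snd ++ [k] := by
  rw [D_of_runLengths_eq (k₀ := p₀.2) (l := l.map Prod.snd ++ [k]) (k₁ := 1),
    trim_of_le (k := 1) hr]
  · simp
  · rw [rle_append_singleton_of_ne (ps := p₀ :: l) h hb]
    simp

lemma IsCInf.exists_append_singleton_of_rle_eq_singleton (hr : 0 < r) (hrs : r < s) {w : List ℕ}
    (hw : IsCInf r s w) {a k : ℕ} (h : rle w = [(a, k)]) : ∃ y, IsCInf r s (w ++ [y]) := by
  have ha : a = r ∨ a = s := hw.eq_or_eq a (fst_mem_of_mem_rle (p := (a, k)) (by simp [h]))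
  have hks : k ≤ s := hw.le_of_runLengths_eq_singleton hrs.le (by simp [h])
  rcases hks.lt_or_eq with hks | hks
  · refine ⟨a, isCInf_append_singleton hw.eq_or_eq ha ?_⟩
    rw [D_of_runLengths_eq_singleton (n := k + 1)
      (by rw [rle_append_singleton_self (ps := []) h]; rfl)]
    split_ifs with hk
    · exact isCInf_nil
    · rw [show k + 1 = s by omega]
      exact isCInf_singleton (by omega) (.inr rfl)
  · subst k
    refine ⟨other r s a, isCInf_append_singleton hw.eq_or_eq (other_eq_or a) ?_⟩
    rw [D_of_runLengths_eq (k₀ := s) (l := []) (k₁ := 1)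
      (by rw [rle_append_singleton_of_ne (ps := []) h (other_ne hrs.ne ha)]; rfl),
      trim_of_lt_of_le hrs le_rfl, trim_of_le (by omega)]
    exact isCInf_singleton (by omega) (.inr rfl)

lemma length_D_lt_of_rle_eq {w : List ℕ} {p₀ : ℕ × ℕ} {l : List (ℕ × ℕ)} {a : ℕ}
    (h : rle w = p₀ :: (l ++ [(a, r)])) : (D r s w).length < w.length := by
  have hK : (rle w).map Prod.snd = p₀.2 :: (l.map Prod.snd ++ [r]) := by simp [h]
  have hD := D_of_runLengths_eq (r := r) (s := s) hK
  have hrle := length_rle_le w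
  have htrim : (trim r s p₀.2).length ≤ 1 := by
    simp only [trim]
    split_ifs <;> simp
  rw [hD, trim_of_le le_rfl]
  simp only [h, List.length_append, List.length_map, List.length_cons, List.length_nil] at hrle ⊢
  omega

theorem IsCInf.exists_append_singleton (hr : 0 < r) (hrs : r < s) {w : List ℕ}
    (hw : IsCInf r s w) : ∃ y, IsCInf r s (w ++ [y]) := by
  induction hn : w.length using Nat.strong_induction_on generalizing w with
  | _ n ih =>
  rcases List.eq_nil_or_concat' (rle w) with hnil | ⟨ps, ⟨a, k⟩, hps⟩
  · rw [rle_eq_nil_iff] at hnil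
    subst hnil
    exact ⟨s, isCInf_singleton (by omega) (.inr rfl)⟩
  rcases ps with _ | ⟨p₀, l⟩
  · exact hw.exists_append_singleton_of_rle_eq_singleton hr hrs hps
  have h : rle w = p₀ :: (l ++ [(a, k)]) := hps
  have hK : (rle w).map Prod.snd = p₀.2 :: (l.map Prod.snd ++ [k]) := by simp [h]
  have ha : a = r ∨ a = s := hw.eq_or_eq a (fst_mem_of_mem_rle (p := (a, k)) (by simp [h]))
  have hb := other_ne hrs.ne ha
  have hks : k ≤ s := (hw.runLengths_eq hrs.le hK).2.2
  have hDw := D_of_runLengths_eq (r := r) (s := s) hK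
  have hext : ∀ y, (y = r ∨ y = s) → IsCInf r s (D r s (w ++ [y])) → IsCInf r s (w ++ [y]) :=
    fun y hy => isCInf_append_singleton hw.eq_or_eq hy
  by_cases hkr : k = r
  · -- the last run disappears from `D w`, which is shorter than `w` and extends by induction
    subst k
    rw [trim_of_le le_rfl, List.append_nil] at hDw
    obtain ⟨y, hy⟩ := ih _ (hn ▸ length_D_lt_of_rle_eq h) hw.derivative rfl
    rcases hy.eq_or_eq y (by simp) with hy' | hy' <;> subst y
    · refine ⟨other r s a, hext _ (other_eq_or a) ?_⟩
      rwa [D_append_singleton_of_ne hr h hb, ← hDw]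
    · refine ⟨a, hext a ha ?_⟩
      rwa [D_append_singleton_self h, trim_of_lt_of_le (k := r + 1) (by omega) hrs, ← hDw]
  · rcases hks.lt_or_eq with hks | hks
    · refine ⟨a, hext a ha ?_⟩
      rw [D_append_singleton_self h, trim_succ hkr hks, ← hDw]
      exact hw.derivative
    · subst k
      refine ⟨other r s a, hext _ (other_eq_or a) ?_⟩
      rw [D_append_singleton_of_ne hr h hb, ← trim_of_lt_of_le hrs le_rfl, ← hDw]
      exact hw.derivative

lemma exists_isCInf_length (hr : 0 < r) (hrs : r < s) (n : ℕ) :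
    ∃ w, w.length = n ∧ IsCInf r s w := by
  induction n with
  | zero => exact ⟨[], rfl, isCInf_nil⟩
  | succ n ih =>
    obtain ⟨w, rfl, hw⟩ := ih
    obtain ⟨y, hy⟩ := hw.exists_append_singleton hr hrs
    exact ⟨w ++ [y], by simp, hy⟩

lemma IsCInf.exists_append_sum_cross (hr : 0 < r) (hrs : r < s) {u : List ℕ}
    (hu : IsCInf r s u) {K : ℕ} (hK : u.sum < K) :
    ∃ ρ y, IsCInf r s (u ++ ρ ++ [y]) ∧ (u ++ ρ).sum < K ∧ K ≤ (u ++ ρ).sum + y := by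
  induction hd : K - u.sum using Nat.strong_induction_on generalizing u with
  | _ d ih =>
  obtain ⟨y, hy⟩ := hu.exists_append_singleton hr hrs
  by_cases hKy : K ≤ u.sum + y
  · exact ⟨[], y, by simpa using hy, by simpa using hK, by simpa using hKy⟩
  · have hy₁ : 1 ≤ y := by rcases hy.eq_or_eq y (by simp) with h | h <;> omega
    obtain ⟨ρ, z, h₁, h₂, h₃⟩ :=
      ih (K - (u ++ [y]).sum) (by simp; omega) hy (by simp; omega) rfl
    exact ⟨y :: ρ, z, by simpa using h₁, by simpa using h₂, by simpa using h₃⟩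

end Extension

section Weight

variable {r s : ℕ}

lemma weight_two_runs (hrs : r ≤ s) {k k' : ℕ} (hk : r ≤ k) (hk' : k' ≤ s) :
    (r + s) * (k * r + k' * s) ≤ (r ^ 2 + s ^ 2) * (k + k') := by
  have : k' * r ≤ k * s :=
    calc k' * r ≤ s * r := Nat.mul_le_mul_right r hk'
      _ ≤ s * k := Nat.mul_le_mul_left s hk
      _ = k * s := Nat.mul_comm s k
  nlinarith [Nat.mul_le_mul this hrs]

/-- Along alternating runs of lengths in `[r, s]`, an `r`-run and an `s`-run together have
average letter at most `(r² + s²) / (r + s)`. -/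
theorem weight_le_of_alternating (hrs : r ≤ s) : ∀ ps : List (ℕ × ℕ),
    (∀ p ∈ ps, (p.1 = r ∨ p.1 = s) ∧ r ≤ p.2 ∧ p.2 ≤ s) → (ps.map Prod.fst).IsChain (· ≠ ·) →
    (r + s) * (ps.map fun p => p.2 * p.1).sum ≤ (r ^ 2 + s ^ 2) * (ps.map Prod.snd).sum + r * s * s
  | [], _, _ => by simp
  | [p], h, _ => by
    obtain ⟨ha, hk₁, hk₂⟩ := h p (by simp)
    simp only [List.map_cons, List.map_nil, List.sum_cons, List.sum_nil, add_zero]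
    rcases ha with ha | ha <;> rw [ha]
    · nlinarith [Nat.mul_le_mul_left p.2 (Nat.mul_le_mul_left s hrs)]
    · nlinarith [Nat.mul_le_mul_left (r * s) hk₂]
  | p :: q :: t, h, hchain => by
    obtain ⟨hp, hp₁, hp₂⟩ := h p (by simp)
    obtain ⟨hq, hq₁, hq₂⟩ := h q (by simp)
    have hpq : p.1 ≠ q.1 := (List.isChain_cons_cons.1 hchain).1
    have ht := weight_le_of_alternating hrs t (fun x hx => h x (by simp [hx]))
      (List.isChain_cons_cons.1 hchain).2.tail
    have hpair : (r + s) * (p.2 * p.1 + q.2 * q.1) ≤ (r ^ 2 + s ^ 2) * (p.2 + q.2) := by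
      rcases hp with hp | hp <;> rcases hq with hq | hq <;> rw [hp, hq] at hpq ⊢
      · exact absurd rfl hpq
      · exact weight_two_runs hrs hp₁ hq₂
      · simpa [add_comm] using weight_two_runs hrs hq₁ hp₂
      · exact absurd rfl hpq
    simp only [List.map_cons, List.sum_cons]
    nlinarith

theorem IsCInf.weight_le (hrs : r ≤ s) {w : List ℕ} (hw : IsCInf r s w) :
    (r + s) * w.sum ≤ (r ^ 2 + s ^ 2) * w.length + 3 * (r + s) * s ^ 2 := by
  rw [← ofRuns_rle w, sum_ofRuns, length_ofRuns]
  have hfst : ∀ p ∈ rle w, p.1 ≤ s := fun p hp => by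
    rcases hw.eq_or_eq _ (fst_mem_of_mem_rle hp) with h | h <;> omega
  rcases List.eq_nil_or_concat' (rle w) with hnil | ⟨ps, p₁, hps⟩
  · simp [hnil]
  rcases ps with _ | ⟨p₀, l⟩
  · have hk := hw.le_of_runLengths_eq_singleton hrs (n := p₁.2) (by simp [hps])
    have := Nat.mul_le_mul hk (hfst p₁ (by simp [hps]))
    simp only [hps, List.nil_append, List.map_cons, List.map_nil, List.sum_cons, List.sum_nil,
      add_zero]
    nlinarith
  · have h : rle w = p₀ :: (l ++ [p₁]) := hps
    obtain ⟨hmid, hk₀, hk₁⟩ :=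
      hw.runLengths_eq hrs (k₀ := p₀.2) (l := l.map Prod.snd) (k₁ := p₁.2) (by simp [h])
    have hl := weight_le_of_alternating hrs l
      (fun p hp => ⟨hw.eq_or_eq _ (fst_mem_of_mem_rle (by simp [h, hp])),
        by rcases hmid p.2 (List.mem_map_of_mem hp) with h | h <;> omega⟩)
      (by
        have hc := (isRunList_rle w).2
        simp only [h, List.map_cons, List.map_append] at hc
        exact hc.tail.left_of_append)
    have h₀ := Nat.mul_le_mul hk₀ (hfst p₀ (by simp [h]))
    have h₁ := Nat.mul_le_mul hk₁ (hfst p₁ (by simp [h]))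
    simp only [h, List.map_cons, List.map_append, List.sum_cons, List.sum_append, List.map_nil,
      List.sum_nil, add_zero]
    nlinarith

lemma IsCInf.sum_add_lt (hrs : r < s) {w : List ℕ} (hw : IsCInf r s w) {n : ℕ}
    (hn : ((r : ℝ) ^ 2 + s ^ 2) / (r + s) * w.length + (3 * s ^ 2 + 2 * r + 1) ≤ n) :
    w.sum + 2 * r < n := by
  have hpos : (0 : ℝ) < r + s := by
    have : (0 : ℝ) < s := by exact_mod_cast (show 0 < s by omega)
    positivity
  have hweight : ((r : ℝ) + s) * w.sum ≤ (r ^ 2 + s ^ 2) * w.length + 3 * (r + s) * s ^ 2 := by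
    exact_mod_cast hw.weight_le hrs.le
  have hsum : (w.sum : ℝ) ≤ (r ^ 2 + s ^ 2) / (r + s) * w.length + 3 * s ^ 2 := by
    rw [div_mul_eq_mul_div, ← sub_le_iff_le_add, le_div_iff₀ hpos]
    linarith
  exact_mod_cast (by linarith : (w.sum : ℝ) + 2 * r < n)

end Weight

section Preimage

variable {r s : ℕ}

/-- Run lengths of a boundary block of total length `f` whose image under `D` is the letter `v`:
either one run, extended by `D` to length `s`, or a discarded run of length `f - v ≤ r` followed
by a run of length `v`. -/
def boundaryCounts (s v f : ℕ) : List ℕ := if v = s ∧ f ≤ s then [f] else [f - v, v]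

lemma boundaryCounts_cases {v f : ℕ} (hv : v = r ∨ v = s) (hf : r < f) :
    (boundaryCounts s v f = [f] ∧ v = s ∧ f ≤ s) ∨
      (boundaryCounts s v f = [f - v, v] ∧ v < f) := by
  unfold boundaryCounts
  split_ifs with h
  · exact .inl ⟨rfl, h⟩
  · refine .inr ⟨rfl, ?_⟩
    rcases hv with rfl | rfl
    · exact hf
    · exact Nat.lt_of_not_le fun hfs => h ⟨rfl, hfs⟩

def preimageCounts (s v₀ : ℕ) (mid : List ℕ) (vL f b : ℕ) : List ℕ :=
  boundaryCounts s v₀ f ++ mid ++ (boundaryCounts s vL b).reverse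

/-- A word whose derivative is `v₀ :: mid ++ [vL]`, starting with the letter `c`, with boundary
blocks of lengths `f` and `b`. -/
def preimage (r s c v₀ : ℕ) (mid : List ℕ) (vL f b : ℕ) : List ℕ :=
  ofRuns (altRuns r s c (preimageCounts s v₀ mid vL f b))

/-- The first letter of `w`, and the length of its first block when the first letter of `D w`
is `v₀`: this recovers `c` and `f` from `preimage r s c v₀ mid vL f b`. -/
def frontData (r v₀ : ℕ) (w : List ℕ) : ℕ × ℕ :=
  let k := ((rle w).map Prod.snd).headI
  (w.headI, if k ≤ r then k + v₀ else k)

variable {v₀ vL c f b : ℕ} {mid : List ℕ}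

lemma rle_preimage (hr : 0 < r) (hrs : r < s) (hv : IsCInf r s (v₀ :: (mid ++ [vL])))
    (hc : c = r ∨ c = s) (hf : r < f) (hb : r < b) :
    rle (preimage r s c v₀ mid vL f b) = altRuns r s c (preimageCounts s v₀ mid vL f b) := by
  refine rle_ofRuns (isRunList_altRuns hrs.ne hc fun k hk => ?_)
  have hv₀ := hv.eq_or_eq v₀ (by simp)
  have hvL := hv.eq_or_eq vL (by simp)
  have hmid : ∀ k ∈ mid, 1 ≤ k := fun k hk => by
    rcases hv.eq_or_eq k (by simp [hk]) with h | h <;> omega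
  simp only [preimageCounts, List.mem_append, List.mem_reverse] at hk
  rcases hk with (hk | hk) | hk
  · rcases boundaryCounts_cases hv₀ hf with ⟨h, -⟩ | ⟨h, h'⟩ <;>
      simp only [h, List.mem_cons, List.not_mem_nil, or_false] at hk <;> omega
  · exact hmid k hk
  · rcases boundaryCounts_cases hvL hb with ⟨h, -⟩ | ⟨h, h'⟩ <;>
      simp only [h, List.mem_cons, List.not_mem_nil, or_false] at hk <;> omega

lemma length_preimage (hv₀ : v₀ = r ∨ v₀ = s) (hvL : vL = r ∨ vL = s) (hf : r < f)
    (hb : r < b) : (preimage r s c v₀ mid vL f b).length = f + mid.sum + b := by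
  rw [preimage, length_ofRuns, map_snd_altRuns, preimageCounts]
  rcases boundaryCounts_cases hv₀ hf with ⟨h₀, -⟩ | ⟨h₀, h₀'⟩ <;>
    rcases boundaryCounts_cases hvL hb with ⟨h₁, -⟩ | ⟨h₁, h₁'⟩ <;>
    simp only [h₀, h₁, List.sum_append, List.sum_cons, List.sum_nil, List.reverse_cons,
      List.reverse_nil, List.nil_append] <;> omega

lemma D_preimage (hr : 0 < r) (hrs : r < s) (hv : IsCInf r s (v₀ :: (mid ++ [vL])))
    (hc : c = r ∨ c = s) (hf : r < f ∧ f ≤ v₀ + r) (hb : r < b ∧ b ≤ vL + r) :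
    D r s (preimage r s c v₀ mid vL f b) = v₀ :: (mid ++ [vL]) := by
  have hK := congrArg (List.map Prod.snd) (rle_preimage hr hrs hv hc hf.1 hb.1)
  have hv₀ := hv.eq_or_eq v₀ (by simp)
  have hvL := hv.eq_or_eq vL (by simp)
  rw [map_snd_altRuns, preimageCounts] at hK
  rcases boundaryCounts_cases hv₀ hf.1 with ⟨h₀, hv₀s, hfs⟩ | ⟨h₀, h₀'⟩ <;>
    rcases boundaryCounts_cases hvL hb.1 with ⟨h₁, hvLs, hbs⟩ | ⟨h₁, h₁'⟩ <;>
    simp only [h₀, h₁, List.reverse_cons, List.reverse_nil, List.nil_append] at hK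
  · rw [D_of_runLengths_eq (k₀ := f) (l := mid) (k₁ := b) (by simpa using hK),
      trim_of_lt_of_le (k := f) hf.1 hfs, trim_of_lt_of_le (k := b) hb.1 hbs]
    simp [hv₀s, hvLs]
  · rw [D_of_runLengths_eq (k₀ := f) (l := mid ++ [vL]) (k₁ := b - vL) (by simpa using hK),
      trim_of_lt_of_le (k := f) hf.1 hfs, trim_of_le (k := b - vL) (by omega)]
    simp [hv₀s]
  · rw [D_of_runLengths_eq (k₀ := f - v₀) (l := v₀ :: mid) (k₁ := b) (by simpa using hK),
      trim_of_le (k := f - v₀) (by omega), trim_of_lt_of_le (k := b) hb.1 hbs]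
    simp [hvLs]
  · rw [D_of_runLengths_eq (k₀ := f - v₀) (l := v₀ :: (mid ++ [vL])) (k₁ := b - vL)
      (by simpa using hK), trim_of_le (k := f - v₀) (by omega), trim_of_le (k := b - vL) (by omega)]
    simp

lemma isCInf_preimage (hr : 0 < r) (hrs : r < s) (hv : IsCInf r s (v₀ :: (mid ++ [vL])))
    (hc : c = r ∨ c = s) (hf : r < f ∧ f ≤ v₀ + r) (hb : r < b ∧ b ≤ vL + r) :
    IsCInf r s (preimage r s c v₀ mid vL f b) := by
  refine isCInf_iff.2 ⟨fun a ha => ?_, D_preimage hr hrs hv hc hf hb ▸ hv⟩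
  rw [← ofRuns_rle (preimage r s c v₀ mid vL f b), rle_preimage hr hrs hv hc hf.1 hb.1] at ha
  obtain ⟨p, hp, hap⟩ := List.mem_flatMap.1 ha
  rw [List.eq_of_mem_replicate hap]
  exact fst_eq_or_of_mem_altRuns hc hp

lemma frontData_preimage (hr : 0 < r) (hrs : r < s) (hv : IsCInf r s (v₀ :: (mid ++ [vL])))
    (hc : c = r ∨ c = s) (hf : r < f ∧ f ≤ v₀ + r) (hb : r < b) :
    frontData r v₀ (preimage r s c v₀ mid vL f b) = (c, f) := by
  obtain ⟨k₀, K, hK, hk₀, hfk⟩ : ∃ k₀ K, preimageCounts s v₀ mid vL f b = k₀ :: K ∧ 1 ≤ k₀ ∧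
      (if k₀ ≤ r then k₀ + v₀ else k₀) = f := by
    rcases boundaryCounts_cases (hv.eq_or_eq v₀ (by simp)) hf.1 with ⟨h₀, -⟩ | ⟨h₀, h₀'⟩
    · exact ⟨f, mid ++ (boundaryCounts s vL b).reverse, by simp [preimageCounts, h₀], by omega,
        if_neg (by omega)⟩
    · exact ⟨f - v₀, v₀ :: (mid ++ (boundaryCounts s vL b).reverse),
        by simp [preimageCounts, h₀], by omega, by rw [if_pos (by omega)]; omega⟩
  have hw : preimage r s c v₀ mid vL f b =
      List.replicate k₀ c ++ ofRuns (altRuns r s (other r s c) K) := by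
    rw [preimage, hK, altRuns_cons, ofRuns_cons]
  have hk : ((rle (preimage r s c v₀ mid vL f b)).map Prod.snd).headI = k₀ := by
    rw [rle_preimage hr hrs hv hc hf.1 hb, map_snd_altRuns, hK, List.headI_cons]
  obtain ⟨k, rfl⟩ : ∃ k, k₀ = k + 1 := ⟨k₀ - 1, by omega⟩
  simp only [frontData, hk, hfk]
  rw [hw, List.replicate_succ, List.cons_append, List.headI_cons]

end Preimage

section Counting

open Finset

variable {r s : ℕ}

theorem IsCInf.exists_frontData_eq (hr : 0 < r) (hrs : r < s) {u : List ℕ} (hu : IsCInf r s u)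
    (hu₀ : u ≠ []) {n : ℕ} (hn : u.sum + 2 * r < n) {c f : ℕ} (hc : c = r ∨ c = s)
    (hf : r < f ∧ f ≤ u.headI + r) :
    ∃ w, w.length = n ∧ IsCInf r s w ∧ u <+: D r s w ∧ frontData r u.headI w = (c, f) := by
  obtain ⟨u₀, u', rfl⟩ := List.exists_cons_of_ne_nil hu₀
  rw [List.headI_cons] at hf ⊢
  obtain ⟨ρ, y, hv, hlt, hle⟩ :=
    hu.exists_append_sum_cross hr hrs (K := n + u₀ - f - r) (by simp at hn ⊢; omega)
  have hv' : IsCInf r s (u₀ :: ((u' ++ ρ) ++ [y])) := by simpa using hv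
  have hy := hv'.eq_or_eq y (by simp)
  have hb : r < n + u₀ - f - (u₀ :: u' ++ ρ).sum ∧ n + u₀ - f - (u₀ :: u' ++ ρ).sum ≤ y + r := by
    omega
  refine ⟨preimage r s c u₀ (u' ++ ρ) y f (n + u₀ - f - (u₀ :: u' ++ ρ).sum), ?_,
    isCInf_preimage hr hrs hv' hc hf hb, ?_, frontData_preimage hr hrs hv' hc hf hb.1⟩
  · rw [length_preimage (hv'.eq_or_eq u₀ (by simp)) hy hf.1 hb.1]
    simp only [List.cons_append, List.sum_cons, List.sum_append] at hlt hle ⊢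
    omega
  · rw [D_preimage hr hrs hv' hc hf hb]
    exact ⟨ρ ++ [y], by simp⟩

lemma mem_allWords {n : ℕ} {w : List ℕ} :
    w ∈ allWords r s n ↔ w.length = n ∧ ∀ a ∈ w, a = r ∨ a = s := by
  induction n generalizing w with
  | zero =>
    simp only [allWords, Finset.mem_singleton, List.length_eq_zero_iff]
    exact ⟨fun h => ⟨h, by simp [h]⟩, And.left⟩
  | succ n ih =>
    cases w with
    | nil => simp [allWords]
    | cons a w =>
      simp only [allWords, Finset.mem_union, Finset.mem_image, List.cons.injEq, ih,
        List.length_cons, List.mem_cons, forall_eq_or_imp]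
      constructor
      · rintro (⟨v, ⟨hv, hv'⟩, rfl, rfl⟩ | ⟨v, ⟨hv, hv'⟩, rfl, rfl⟩) <;> simp_all
      · rintro ⟨hw, ha | ha, hw'⟩ <;> subst ha
        · exact .inl ⟨w, ⟨by omega, hw'⟩, rfl, rfl⟩
        · exact .inr ⟨w, ⟨by omega, hw'⟩, rfl, rfl⟩

open Classical in
noncomputable def cinfWords (r s n : ℕ) : Finset (List ℕ) :=
  (allWords r s n).filter (IsCInf r s)

lemma mem_cinfWords {n : ℕ} {w : List ℕ} :
    w ∈ cinfWords r s n ↔ w.length = n ∧ IsCInf r s w := by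
  simp only [cinfWords, Finset.mem_filter, mem_allWords]
  exact ⟨fun h => ⟨h.1.1, h.2⟩, fun h => ⟨⟨h.1, h.2.eq_or_eq⟩, h.2⟩⟩

lemma coe_cinfWords (n : ℕ) :
    (cinfWords r s n : Set (List ℕ)) = {w | w.length = n ∧ IsCInf r s w} := by
  ext w
  simp [mem_cinfWords]

lemma two_mul_headI_le_card_fiber (hr : 0 < r) (hrs : r < s) {m n : ℕ} (hm : 1 ≤ m)
    {u : List ℕ} (hu : u ∈ cinfWords r s m) (hn : u.sum + 2 * r < n) :
    2 * u.headI ≤ #{w ∈ cinfWords r s n | (D r s w).take m = u} := by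
  obtain ⟨hlen, hu⟩ := mem_cinfWords.1 hu
  have hu₀ : u ≠ [] := by rintro rfl; simp at hlen; omega
  have hcard : #(({r, s} : Finset ℕ) ×ˢ Finset.Icc (r + 1) (u.headI + r)) = 2 * u.headI := by
    rw [Finset.card_product, Finset.card_pair hrs.ne, Nat.card_Icc]
    omega
  rw [← hcard]
  refine Finset.card_le_card_of_surjOn (frontData r u.headI) fun ⟨c, f⟩ hcf => ?_
  simp only [Finset.coe_product, Set.mem_prod, Finset.coe_insert, Finset.coe_singleton,
    Set.mem_insert_iff, Set.mem_singleton_iff, Finset.coe_Icc, Set.mem_Icc] at hcf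
  obtain ⟨w, hwlen, hw, hpre, hfront⟩ :=
    hu.exists_frontData_eq hr hrs hu₀ hn hcf.1 ⟨hcf.2.1, hcf.2.2⟩
  refine ⟨w, ?_, hfront⟩
  simp only [Finset.coe_filter, Set.mem_ofPred_eq, mem_cinfWords]
  exact ⟨⟨hwlen, hw⟩, hlen ▸ (List.prefix_iff_eq_take.1 hpre).symm⟩

lemma sum_two_mul_headI_cinfWords (hrs : r ≠ s) {m : ℕ} (hm : 1 ≤ m) :
    ∑ u ∈ cinfWords r s m, 2 * u.headI = (r + s) * #(cinfWords r s m) := by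
  have hexch : ∀ u ∈ cinfWords r s m, exch r s u ∈ cinfWords r s m := fun u hu => by
    obtain ⟨hlen, hu⟩ := mem_cinfWords.1 hu
    exact mem_cinfWords.2 ⟨by simpa [exch] using hlen, hu.exch hrs⟩
  have hinv : ∀ u ∈ cinfWords r s m, exch r s (exch r s u) = u := fun u hu =>
    exch_exch hrs (mem_cinfWords.1 hu).2.eq_or_eq
  have hswap : ∑ u ∈ cinfWords r s m, (exch r s u).headI = ∑ u ∈ cinfWords r s m, u.headI :=
    Finset.sum_nbij' (exch r s) (exch r s) hexch hexch hinv hinv fun _ _ => rfl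
  have hpair : ∀ u ∈ cinfWords r s m, u.headI + (exch r s u).headI = r + s := fun u hu => by
    obtain ⟨hlen, hu⟩ := mem_cinfWords.1 hu
    obtain ⟨a, u', rfl⟩ := List.exists_cons_of_ne_nil (l := u) (by rintro rfl; simp at hlen; omega)
    exact add_other (hu.eq_or_eq a (by simp))
  rw [Finset.sum_congr rfl fun u _ => two_mul u.headI, Finset.sum_add_distrib]
  nth_rw 2 [← hswap]
  rw [← Finset.sum_add_distrib, Finset.sum_congr rfl hpair, Finset.sum_const, smul_eq_mul,
    mul_comm]

theorem card_cinfWords_mul_le (hr : 0 < r) (hrs : r < s) {m n : ℕ} (hm : 1 ≤ m)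
    (hn : ∀ u ∈ cinfWords r s m, u.sum + 2 * r < n) :
    (r + s) * #(cinfWords r s m) ≤ #(cinfWords r s n) := by
  calc (r + s) * #(cinfWords r s m)
      = ∑ u ∈ cinfWords r s m, 2 * u.headI := (sum_two_mul_headI_cinfWords hrs.ne hm).symm
    _ ≤ ∑ u ∈ cinfWords r s m, #{w ∈ cinfWords r s n | (D r s w).take m = u} :=
      Finset.sum_le_sum fun u hu => two_mul_headI_le_card_fiber hr hrs hm hu (hn u hu)
    _ = #{w ∈ cinfWords r s n | (D r s w).take m ∈ cinfWords r s m} :=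
      Finset.sum_card_fiberwise_eq_card_filter _ _ _
    _ ≤ #(cinfWords r s n) := Finset.card_filter_le _ _

end Counting

lemma exists_nat_mul_add_le {Q A F : ℝ} (hQ : 1 < Q) (hA : 0 ≤ A) (hF : (Q - 1) * F = A + Q)
    {n : ℕ} (hn : Q + A + 1 ≤ n) :
    ∃ m : ℕ, 1 ≤ m ∧ m < n ∧ Q * m + A ≤ n ∧ n + F ≤ Q * (m + F) := by
  have hQ0 : 0 < Q := by linarith
  have hx : 1 ≤ (n - A) / Q := by rw [le_div_iff₀ hQ0]; linarith
  refine ⟨⌊(n - A) / Q⌋₊, Nat.le_floor (by exact_mod_cast hx), ?_, ?_, ?_⟩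
  · have : (n - A) / Q < n := by rw [div_lt_iff₀ hQ0]; nlinarith
    exact_mod_cast (Nat.floor_le (by linarith)).trans_lt this
  · have := mul_le_mul_of_nonneg_left (Nat.floor_le (by linarith : 0 ≤ (n - A) / Q)) hQ0.le
    rw [mul_div_cancel₀ _ hQ0.ne'] at this
    linarith
  · have := mul_lt_mul_of_pos_left (Nat.sub_one_lt_floor ((n - A) / Q)) hQ0
    rw [mul_sub, mul_div_cancel₀ _ hQ0.ne'] at this
    linarith

theorem exists_const_mul_rpow_le {g : ℕ → ℝ} {P Q A : ℝ} (hP : 1 ≤ P) (hQ : 1 < Q) (hA : 0 ≤ A)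
    (hg : ∀ n, 1 ≤ g n) (hstep : ∀ m n : ℕ, 1 ≤ m → Q * m + A ≤ n → P * g m ≤ g n) :
    ∃ C > 0, ∀ n : ℕ, 1 ≤ n → C * (n : ℝ) ^ Real.logb Q P ≤ g n := by
  set β := Real.logb Q P
  have hβ : 0 ≤ β := Real.logb_nonneg hQ hP
  set F := (A + Q) / (Q - 1)
  have hF : (Q - 1) * F = A + Q := mul_div_cancel₀ _ (by linarith)
  have hF0 : 0 ≤ F := div_nonneg (by linarith) (by linarith)
  have hbase : 0 < Q + A + 1 + F := by linarith
  set C := ((Q + A + 1 + F) ^ β)⁻¹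
  have hC : 0 < C := inv_pos.2 (Real.rpow_pos_of_pos hbase β)
  -- the shift `F` absorbs the additive constant `A` of the recursion
  have key : ∀ n : ℕ, 1 ≤ n → C * ((n : ℝ) + F) ^ β ≤ g n := by
    intro n
    induction n using Nat.strong_induction_on with
    | _ n ih =>
    intro hn
    by_cases hsmall : (n : ℝ) < Q + A + 1
    · calc C * ((n : ℝ) + F) ^ β ≤ C * (Q + A + 1 + F) ^ β := by gcongr
        _ = 1 := inv_mul_cancel₀ (Real.rpow_pos_of_pos hbase β).ne'
        _ ≤ g n := hg n
    · obtain ⟨m, hm, hmn, hQm, hmF⟩ := exists_nat_mul_add_le hQ hA hF (not_lt.1 hsmall)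
      calc C * ((n : ℝ) + F) ^ β ≤ C * (Q * (m + F)) ^ β := by gcongr
        _ = P * (C * ((m : ℝ) + F) ^ β) := by
          rw [Real.mul_rpow (by linarith) (by positivity), Real.rpow_logb (by linarith)
            (by linarith) (by linarith)]
          ring
        _ ≤ P * g m := by gcongr; exact ih m hmn hm
        _ ≤ g n := hstep m n hm hQm
  refine ⟨C, hC, fun n hn => (?_ : _ ≤ _).trans (key n hn)⟩
  gcongr
  linarith

/-- Lower bound on the complexity of C∞-words over {r,s}. -/
theorem complexity_lower_bound (r s : ℕ) (hr : 0 < r) (hrs : r < s) :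
    ∃ (N : ℕ) (C : ℝ), 0 < C ∧ ∀ n : ℕ, N ≤ n →
      C * (n : ℝ) ^ (Real.log ((r : ℝ) + s) / Real.log (((r : ℝ) ^ 2 + s ^ 2) / (r + s))) ≤
        (({w : List ℕ | w.length = n ∧ IsCInf r s w}.ncard : ℝ)) := by
  have hr1 : (1 : ℝ) ≤ r := by exact_mod_cast hr
  have hs2 : (2 : ℝ) ≤ s := by exact_mod_cast (show 2 ≤ s by omega)
  have hQ : 1 < ((r : ℝ) ^ 2 + s ^ 2) / (r + s) := by
    rw [one_lt_div (by positivity)]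
    nlinarith
  obtain ⟨C, hC, hbound⟩ := exists_const_mul_rpow_le
    (g := fun n => ((cinfWords r s n).card : ℝ)) (P := r + s) (A := 3 * s ^ 2 + 2 * r + 1)
    (by linarith) hQ (by positivity)
    (fun n => by
      obtain ⟨w, hw⟩ := exists_isCInf_length hr hrs n
      exact_mod_cast Finset.card_pos.2 ⟨w, mem_cinfWords.2 hw⟩)
    (fun m n hm hmn => by
      exact_mod_cast card_cinfWords_mul_le hr hrs hm fun u hu => by
        obtain ⟨hlen, hu⟩ := mem_cinfWords.1 hu
        exact hu.sum_add_lt hrs (by rwa [hlen]))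
  refine ⟨1, C, hC, fun n hn => ?_⟩
  rw [← coe_cinfWords, Set.ncard_coe_finset, Real.log_div_log]
  exact hbound n hn

end Kola
end
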